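/- arXiv:cond-mat/9902261 — 7 statements merged into one kernel-verified Lean document; each statement's English description precedes it below -/
import Mathlib

section
/- If (f,q) solves the one-dimensional Ginzburg-Landau system (1/κ²)f'' = f(f²+q²−1), q'' = qf² on (−a,a) with boundary conditions f'(±a)=0, q'(±a)=h₀, and f is not identically zero, then |f(x)| ≤ 1 for all x in (−a,a). -/
/-!
Let `x₀` be a maximum point of `f²` on `[-a, a]`. Then `(f²)'(x₀) = 0`, at an endpoint because
`f'(±a) = 0`. If `f(x₀)² > 1`, the equation gives
`(f²)''(x₀) = 2 f'(x₀)² + 2 κ² f(x₀)² (f(x₀)² + q(x₀)² - 1) > 0`, so `x₀` is a strict local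
minimum of `f²`, which contradicts maximality.
-/

open Set Filter Topology

section

variable {g : ℝ → ℝ} {x₀ : ℝ}

lemma eventually_nhdsGT_lt_of_deriv_deriv_pos (hc : ContinuousAt g x₀) (hd : deriv g x₀ = 0)
    (hdd : 0 < deriv (deriv g) x₀) : ∀ᶠ x in 𝓝[>] x₀, g x₀ < g x := by
  have hpos : ∀ᶠ x in 𝓝[>] x₀, 0 < deriv g x := deriv_pos_right_of_sign_deriv <|
    nhdsWithin_le_nhds (eventually_nhdsWithin_sign_eq_of_deriv_pos hdd hd)
  obtain ⟨u, hu, hsub⟩ := mem_nhdsGT_iff_exists_Ioo_subset.1 hpos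
  have hmono : StrictMonoOn g (Ico x₀ u) := by
    refine strictMonoOn_of_deriv_pos (convex_Ico x₀ u) (fun x hx => ?_) (by rwa [interior_Ico])
    rcases hx.1.eq_or_lt with rfl | hlt
    · exact hc.continuousWithinAt
    · exact (differentiableAt_of_deriv_ne_zero (hsub ⟨hlt, hx.2⟩).ne').continuousAt
        |>.continuousWithinAt
  filter_upwards [Ioo_mem_nhdsGT hu] with x hx
  exact hmono (left_mem_Ico.2 hu) (Ioo_subset_Ico_self hx) hx.1

lemma eventually_nhdsLT_lt_of_deriv_deriv_pos (hc : ContinuousAt g x₀) (hd : deriv g x₀ = 0)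
    (hdd : 0 < deriv (deriv g) x₀) : ∀ᶠ x in 𝓝[<] x₀, g x₀ < g x := by
  have hderiv : deriv (fun x => g (-x)) = fun x => -deriv g (-x) := funext (deriv_comp_neg g)
  have hright := eventually_nhdsGT_lt_of_deriv_deriv_pos (g := fun x => g (-x)) (x₀ := -x₀)
    (by simpa using (neg_neg x₀ ▸ hc).comp continuous_neg.continuousAt) (by simp [hderiv, hd])
    (by simpa [hderiv, deriv.neg, deriv_comp_neg] using hdd)
  simpa using tendsto_neg_nhdsLT.eventually hright

lemma IsMaxOn.deriv_deriv_nonpos {b c : ℝ} (hmax : IsMaxOn g (Icc b c) x₀) (hbc : b < c)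
    (hx₀ : x₀ ∈ Icc b c) (hc : ContinuousAt g x₀) (hd : deriv g x₀ = 0) :
    deriv (deriv g) x₀ ≤ 0 := by
  by_contra! hdd
  obtain ⟨x, hgx, hx⟩ : ∃ x, g x₀ < g x ∧ x ∈ Icc b c := by
    rcases hx₀.2.lt_or_eq with hxc | rfl
    · exact (eventually_nhdsGT_lt_of_deriv_deriv_pos hc hd hdd).and
        (Icc_mem_nhdsGT_of_mem ⟨hx₀.1, hxc⟩) |>.exists
    · exact (eventually_nhdsLT_lt_of_deriv_deriv_pos hc hd hdd).and (Icc_mem_nhdsLT hbc) |>.exists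
  exact (hmax hx).not_gt hgx

lemma IsMaxOn.deriv_eq_zero_of_deriv_Icc_endpoints {b c : ℝ}
    (hmax : IsMaxOn g (Icc b c) x₀) (hx₀ : x₀ ∈ Icc b c) (hb : deriv g b = 0)
    (hc : deriv g c = 0) : deriv g x₀ = 0 := by
  rcases hx₀.1.eq_or_lt with rfl | hbx
  · exact hb
  rcases hx₀.2.eq_or_lt with rfl | hxc
  · exact hc
  exact (hmax.isLocalMax (Icc_mem_nhds hbx hxc)).deriv_eq_zero

end

lemma deriv_deriv_sq {f : ℝ → ℝ} (hf : Differentiable ℝ f) (hf' : Differentiable ℝ (deriv f))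
    (x : ℝ) :
    deriv (deriv fun y => f y ^ 2) x = 2 * deriv f x ^ 2 + 2 * f x * deriv (deriv f) x := by
  have hderiv : deriv (fun y => f y ^ 2) = fun y => 2 * f y * deriv f y := by
    funext y; simp [deriv_fun_pow (hf y)]
  rw [hderiv, (((hf x).hasDerivAt.const_mul 2).fun_mul (hf' x).hasDerivAt).deriv]
  ring

theorem stmt_0_general (a κ : ℝ) (ha : 0 < a) (hκ : 0 < κ)
    (f q : ℝ → ℝ) (hf2 : ContDiff ℝ 2 f) (hq2 : ContDiff ℝ 2 q)
    (hfeq : ∀ x ∈ Set.Ioo (-a) a,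
      (1 / κ ^ 2) * deriv (deriv f) x = f x * ((f x) ^ 2 + (q x) ^ 2 - 1))
    (hbf1 : deriv f (-a) = 0) (hbf2 : deriv f a = 0) :
    ∀ x ∈ Set.Ioo (-a) a, |f x| ≤ 1 := by
  have hf : Differentiable ℝ f := hf2.differentiable (by norm_num)
  have hf' : ContDiff ℝ 1 (deriv f) := hf2.deriv'
  have hfeq_Icc : EqOn (deriv (deriv f)) (fun x => κ ^ 2 * (f x * (f x ^ 2 + q x ^ 2 - 1)))
      (Icc (-a) a) := by
    rw [← closure_Ioo (by linarith : -a ≠ a)]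
    refine EqOn.closure (fun x hx => ?_) (hf'.continuous_deriv le_rfl) (by fun_prop)
    rw [← hfeq x hx]
    field_simp
  have hcont : Continuous fun x => f x ^ 2 := hf.continuous.pow 2
  obtain ⟨x₀, hx₀, hmax⟩ := (isCompact_Icc (a := -a) (b := a)).exists_isMaxOn
    (nonempty_Icc.2 (by linarith)) hcont.continuousOn
  have hd : deriv (fun x => f x ^ 2) x₀ = 0 :=
    hmax.deriv_eq_zero_of_deriv_Icc_endpoints hx₀ (by simp [deriv_fun_pow (hf _), hbf1])
      (by simp [deriv_fun_pow (hf _), hbf2])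
  have hdd := hmax.deriv_deriv_nonpos (by linarith) hx₀ hcont.continuousAt hd
  rw [deriv_deriv_sq hf (hf'.differentiable one_ne_zero), hfeq_Icc hx₀] at hdd
  intro x hx
  rw [← sq_le_one_iff_abs_le_one]
  by_contra! hx1
  have hx₀1 : 1 < f x₀ ^ 2 := hx1.trans_le (hmax (Ioo_subset_Icc_self hx))
  have hpos : 0 < κ ^ 2 * (f x₀ ^ 2 * (f x₀ ^ 2 + q x₀ ^ 2 - 1)) :=
    mul_pos (by positivity) (mul_pos (by linarith) (by nlinarith [sq_nonneg (q x₀)]))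
  nlinarith [sq_nonneg (deriv f x₀)]

theorem stmt_0 (a κ h₀ : ℝ) (ha : 0 < a) (hκ : 0 < κ) (hh₀ : 0 ≤ h₀)
    (f q : ℝ → ℝ) (hf2 : ContDiff ℝ 2 f) (hq2 : ContDiff ℝ 2 q)
    (hfeq : ∀ x ∈ Set.Ioo (-a) a,
      (1 / κ ^ 2) * deriv (deriv f) x = f x * ((f x) ^ 2 + (q x) ^ 2 - 1))
    (hqeq : ∀ x ∈ Set.Ioo (-a) a, deriv (deriv q) x = q x * (f x) ^ 2)
    (hbf1 : deriv f (-a) = 0) (hbf2 : deriv f a = 0)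
    (hbq1 : deriv q (-a) = h₀) (hbq2 : deriv q a = h₀)
    (hnz : ∃ x ∈ Set.Icc (-a) a, f x ≠ 0) :
    ∀ x ∈ Set.Ioo (-a) a, |f x| ≤ 1 :=
  stmt_0_general a κ ha hκ f q hf2 hq2 hfeq hbf1 hbf2
end

section
/- If (f,q) solves the one-dimensional Ginzburg-Landau system with f > 0 on [−a,a] and h₀ > 0, then q is strictly increasing on (−a,a) and has a unique zero a₀ in (−a,a); moreover q' is decreasing on (−a,a₀) and increasing on (a₀,a). -/
/-!
Put `w = f²`, so that `q'' = w q` with `w > 0`. Wherever `q` has a sign, `q'` is strictly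
monotone in the same direction. If `q'` had a non-positive value, its minimum would lie at an
interior point `m` (since `q' = h₀ > 0` at the ends), where `q'' = 0` forces `q m = 0`. If
`q' m < 0`, then `q < 0` just to the right of `m`, so `q'` keeps decreasing there, contradicting
minimality; if `q' m = 0`, Grönwall's inequality for `q² + q'²` makes `q' ≡ 0` on `[m, a]`,
contradicting `q' a = h₀`. Hence `q' > 0` and `q` is strictly increasing. Finally
`q (-a) < 0 < q a`, for otherwise `q'` would be strictly monotone on `[-a, a]` although
`q' (-a) = q' a`; the zero `a₀` of `q` then splits the interval into the parts where `q'`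
decreases and increases.
-/

open Set

section LinearSecondOrder

variable {q w : ℝ → ℝ}

lemma strictMonoOn_deriv_of_pos {s t : ℝ} (hq : ContDiff ℝ 2 q)
    (hode : ∀ x ∈ Ioo s t, deriv (deriv q) x = q x * w x) (hw : ∀ x ∈ Ioo s t, 0 < w x)
    (hpos : ∀ x ∈ Ioo s t, 0 < q x) : StrictMonoOn (deriv q) (Icc s t) :=
  strictMonoOn_of_deriv_pos (convex_Icc s t) (hq.continuous_deriv one_le_two).continuousOn
    fun x hx => by
      rw [interior_Icc] at hx
      rw [hode x hx]
      exact mul_pos (hpos x hx) (hw x hx)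

lemma strictAntiOn_deriv_of_neg {s t : ℝ} (hq : ContDiff ℝ 2 q)
    (hode : ∀ x ∈ Ioo s t, deriv (deriv q) x = q x * w x) (hw : ∀ x ∈ Ioo s t, 0 < w x)
    (hneg : ∀ x ∈ Ioo s t, q x < 0) : StrictAntiOn (deriv q) (Icc s t) :=
  strictAntiOn_of_deriv_neg (convex_Icc s t) (hq.continuous_deriv one_le_two).continuousOn
    fun x hx => by
      rw [interior_Icc] at hx
      rw [hode x hx]
      exact mul_neg_of_neg_of_pos (hneg x hx) (hw x hx)

lemma exists_deriv_lt_of_eq_zero_of_deriv_neg {m d : ℝ} (hq : ContDiff ℝ 2 q)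
    (hode : ∀ x ∈ Ioo m d, deriv (deriv q) x = q x * w x) (hw : ∀ x ∈ Ioo m d, 0 < w x)
    (hmd : m < d) (hqm : q m = 0) (hq'm : deriv q m < 0) :
    ∃ y ∈ Ioc m d, deriv q y < deriv q m := by
  obtain ⟨u, hmu, hu⟩ : ∃ u ∈ Ioi m, Ioo m u ⊆ {x | deriv q x < 0} :=
    mem_nhdsGT_iff_exists_Ioo_subset.1 <| nhdsWithin_le_nhds <|
      (hq.continuous_deriv one_le_two).continuousAt.eventually_lt continuousAt_const hq'm
  set y := min u d
  have hmy : m < y := lt_min hmu hmd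
  have hsub : Ioo m y ⊆ Ioo m d := Ioo_subset_Ioo_right (min_le_right u d)
  have hq_anti : StrictAntiOn q (Icc m y) :=
    strictAntiOn_of_deriv_neg (convex_Icc m y) hq.continuous.continuousOn fun x hx =>
      hu (Ioo_subset_Ioo_right (min_le_left u d) (interior_Icc (a := m) ▸ hx))
  have hq_neg : ∀ x ∈ Ioo m y, q x < 0 := fun x hx =>
    hqm ▸ hq_anti (left_mem_Icc.2 hmy.le) (Ioo_subset_Icc_self hx) hx.1
  exact ⟨y, ⟨hmy, min_le_right u d⟩,
    strictAntiOn_deriv_of_neg hq (fun x hx => hode x (hsub hx)) (fun x hx => hw x (hsub hx))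
      hq_neg (left_mem_Icc.2 hmy.le) (right_mem_Icc.2 hmy.le) hmy⟩

lemma eqOn_deriv_zero_of_eq_zero_of_deriv_eq_zero {m d : ℝ} (hq : ContDiff ℝ 2 q)
    (hw : ContinuousOn w (Icc m d)) (hode : ∀ x ∈ Ico m d, deriv (deriv q) x = q x * w x)
    (hqm : q m = 0) (hq'm : deriv q m = 0) : EqOn (deriv q) 0 (Icc m d) := by
  obtain ⟨C, hC⟩ := isCompact_Icc.exists_bound_of_continuousOn hw
  set E : ℝ → ℝ := fun x => q x ^ 2 + deriv q x ^ 2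
  have hE : ∀ x, HasDerivAt E (2 * q x * deriv q x + 2 * deriv q x * deriv (deriv q) x) x := by
    intro x
    refine (((hq.differentiable two_ne_zero x).hasDerivAt.fun_pow 2).add
      (((hq.deriv' (n := 1)).differentiable one_ne_zero x).hasDerivAt.fun_pow 2)).congr_deriv ?_
    norm_num
  have hbound : ∀ x ∈ Ico m d, ‖2 * q x * deriv q x + 2 * deriv q x * deriv (deriv q) x‖
      ≤ (1 + C) * ‖E x‖ := by
    intro x hx
    have hwx : |1 + w x| ≤ 1 + C :=
      (abs_add_le 1 (w x)).trans (by simpa using hC x (Ico_subset_Icc_self hx))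
    have hqq' : |2 * q x * deriv q x| ≤ E x := by
      rw [abs_le]
      constructor <;> nlinarith [sq_nonneg (q x + deriv q x), sq_nonneg (q x - deriv q x)]
    rw [hode x hx, Real.norm_eq_abs, Real.norm_eq_abs, abs_of_nonneg (by positivity : 0 ≤ E x),
      show 2 * q x * deriv q x + 2 * deriv q x * (q x * w x) = 2 * q x * deriv q x * (1 + w x) by
        ring, abs_mul, mul_comm (1 + C)]
    exact mul_le_mul hqq' hwx (abs_nonneg _) (by positivity)
  have hE0 := eq_zero_of_abs_deriv_le_mul_abs_self_of_eq_zero_right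
    (fun x _ => (hE x).continuousAt.continuousWithinAt) (fun x _ => (hE x).hasDerivWithinAt)
    (by simp [E, hqm, hq'm]) hbound
  intro x hx
  have := hE0 x hx
  simp only [E] at this
  simp only [Pi.zero_apply]
  nlinarith [sq_nonneg (q x), sq_nonneg (deriv q x)]

lemma deriv_pos_of_deriv_left_pos_of_deriv_right_pos {c d : ℝ} (hq : ContDiff ℝ 2 q)
    (hw_cont : ContinuousOn w (Icc c d)) (hw : ∀ x ∈ Ioo c d, 0 < w x)
    (hode : ∀ x ∈ Ioo c d, deriv (deriv q) x = q x * w x)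
    (hc : 0 < deriv q c) (hd : 0 < deriv q d) : ∀ x ∈ Icc c d, 0 < deriv q x := by
  by_contra! ⟨x₀, hx₀, hx₀_nonpos⟩
  obtain ⟨m, hm, hmin⟩ :=
    isCompact_Icc.exists_isMinOn ⟨x₀, hx₀⟩ (hq.continuous_deriv one_le_two).continuousOn
  have hq'm : deriv q m ≤ 0 := (hmin hx₀).trans hx₀_nonpos
  have hm' : m ∈ Ioo c d :=
    ⟨hm.1.lt_of_ne (by rintro rfl; linarith), hm.2.lt_of_ne (by rintro rfl; linarith)⟩
  have hqm : q m = 0 := by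
    have h := hode m hm'
    rw [(hmin.isLocalMin (Icc_mem_nhds hm'.1 hm'.2)).deriv_eq_zero] at h
    exact (mul_eq_zero.1 h.symm).resolve_right (hw m hm').ne'
  rcases hq'm.lt_or_eq with hneg | hzero
  · obtain ⟨y, hy, hlt⟩ := exists_deriv_lt_of_eq_zero_of_deriv_neg hq
      (fun x hx => hode x ⟨hm'.1.trans hx.1, hx.2⟩)
      (fun x hx => hw x ⟨hm'.1.trans hx.1, hx.2⟩) hm'.2 hqm hneg
    exact (hmin ⟨hm.1.trans hy.1.le, hy.2⟩).not_gt hlt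
  · have := eqOn_deriv_zero_of_eq_zero_of_deriv_eq_zero hq
      (hw_cont.mono (Icc_subset_Icc_left hm.1)) (fun x hx => hode x ⟨hm'.1.trans_le hx.1, hx.2⟩)
      hqm hzero (right_mem_Icc.2 hm.2)
    simp only [Pi.zero_apply] at this
    linarith

lemma neg_left_and_pos_right_of_deriv_eq {c d : ℝ} (hq : ContDiff ℝ 2 q)
    (hw : ∀ x ∈ Ioo c d, 0 < w x) (hode : ∀ x ∈ Ioo c d, deriv (deriv q) x = q x * w x)
    (hcd : c < d) (hmono : StrictMonoOn q (Icc c d)) (hq' : deriv q c = deriv q d) :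
    q c < 0 ∧ 0 < q d := by
  have hc := left_mem_Icc.2 hcd.le
  have hd := right_mem_Icc.2 hcd.le
  constructor
  · by_contra! h
    have := strictMonoOn_deriv_of_pos hq hode hw
      (fun x hx => h.trans_lt (hmono hc (Ioo_subset_Icc_self hx) hx.1)) hc hd hcd
    exact this.ne hq'
  · by_contra! h
    have := strictAntiOn_deriv_of_neg hq hode hw
      (fun x hx => (hmono (Ioo_subset_Icc_self hx) hd hx.2).trans_le h) hc hd hcd
    exact this.ne' hq'

end LinearSecondOrder

theorem stmt_1_general (a h₀ : ℝ) (ha : 0 < a) (hh₀ : 0 < h₀)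
    (f q : ℝ → ℝ) (hf2 : ContDiff ℝ 2 f) (hq2 : ContDiff ℝ 2 q)
    (hqeq : ∀ x ∈ Set.Ioo (-a) a, deriv (deriv q) x = q x * (f x) ^ 2)
    (hbq1 : deriv q (-a) = h₀) (hbq2 : deriv q a = h₀)
    (hfpos : ∀ x ∈ Set.Icc (-a) a, 0 < f x) :
    StrictMonoOn q (Set.Ioo (-a) a) ∧
    ∃! a₀, a₀ ∈ Set.Ioo (-a) a ∧ q a₀ = 0 ∧
      AntitoneOn (deriv q) (Set.Ioo (-a) a₀) ∧
      MonotoneOn (deriv q) (Set.Ioo a₀ a) := by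
  have hlt : -a < a := by linarith
  have hw : ∀ x ∈ Ioo (-a) a, 0 < f x ^ 2 := fun x hx =>
    pow_pos (hfpos x (Ioo_subset_Icc_self hx)) 2
  have hq' := deriv_pos_of_deriv_left_pos_of_deriv_right_pos hq2
    (hf2.continuous.pow 2).continuousOn hw hqeq (hbq1 ▸ hh₀) (hbq2 ▸ hh₀)
  have hmono : StrictMonoOn q (Icc (-a) a) :=
    strictMonoOn_of_deriv_pos (convex_Icc _ _) hq2.continuous.continuousOn
      fun x hx => hq' x (interior_subset hx)
  obtain ⟨hleft, hright⟩ :=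
    neg_left_and_pos_right_of_deriv_eq hq2 hw hqeq hlt hmono (hbq1.trans hbq2.symm)
  obtain ⟨a₀, ha₀, hqa₀⟩ := intermediate_value_Ioo hlt.le hq2.continuous.continuousOn
    ⟨hleft, hright⟩
  have ha₀' := Ioo_subset_Icc_self ha₀
  refine ⟨hmono.mono Ioo_subset_Icc_self, a₀, ⟨ha₀, hqa₀, ?_, ?_⟩,
    fun b hb => hmono.injOn (Ioo_subset_Icc_self hb.1) ha₀' (hb.2.1.trans hqa₀.symm)⟩
  · refine (strictAntiOn_deriv_of_neg hq2 (fun x hx => hqeq x ⟨hx.1, hx.2.trans ha₀.2⟩)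
      (fun x hx => hw x ⟨hx.1, hx.2.trans ha₀.2⟩) (fun x hx => ?_)).antitoneOn.mono
      Ioo_subset_Icc_self
    exact hqa₀ ▸ hmono (Ioo_subset_Icc_self ⟨hx.1, hx.2.trans ha₀.2⟩) ha₀' hx.2
  · refine (strictMonoOn_deriv_of_pos hq2 (fun x hx => hqeq x ⟨ha₀.1.trans hx.1, hx.2⟩)
      (fun x hx => hw x ⟨ha₀.1.trans hx.1, hx.2⟩) (fun x hx => ?_)).monotoneOn.mono
      Ioo_subset_Icc_self
    exact hqa₀ ▸ hmono ha₀' (Ioo_subset_Icc_self ⟨ha₀.1.trans hx.1, hx.2⟩) hx.1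

theorem stmt_1 (a κ h₀ : ℝ) (ha : 0 < a) (hκ : 0 < κ) (hh₀ : 0 < h₀)
    (f q : ℝ → ℝ) (hf2 : ContDiff ℝ 2 f) (hq2 : ContDiff ℝ 2 q)
    (hfeq : ∀ x ∈ Set.Ioo (-a) a,
      (1 / κ ^ 2) * deriv (deriv f) x = f x * ((f x) ^ 2 + (q x) ^ 2 - 1))
    (hqeq : ∀ x ∈ Set.Ioo (-a) a, deriv (deriv q) x = q x * (f x) ^ 2)
    (hbf1 : deriv f (-a) = 0) (hbf2 : deriv f a = 0)
    (hbq1 : deriv q (-a) = h₀) (hbq2 : deriv q a = h₀)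
    (hfpos : ∀ x ∈ Set.Icc (-a) a, 0 < f x) :
    StrictMonoOn q (Set.Ioo (-a) a) ∧
    ∃! a₀, a₀ ∈ Set.Ioo (-a) a ∧ q a₀ = 0 ∧
      AntitoneOn (deriv q) (Set.Ioo (-a) a₀) ∧
      MonotoneOn (deriv q) (Set.Ioo a₀ a) :=
  stmt_1_general a h₀ ha hh₀ f q hf2 hq2 hqeq hbq1 hbq2 hfpos
end

section
/- If (f,q) is a positive solution of the full Ginzburg-Landau system on [−a,a] such that f is even and q is odd, then the restriction to [0,a] satisfies f'(0)=0, q(0)=0, f(0)∈(0,1), q'(0)≥0 and f'(a)=0, q'(a)=h₀; i.e. it solves the symmetric initial-value formulation. -/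
/-!
The parities give `f'(0) = 0` and `q(0) = 0`. Since `q'' = f²q` with `f > 0`, `q` has no negative
interior minimum on `[0, a]`, and `q'(a) = h₀ > 0` excludes one at `a`; so `q ≥ 0` on `[0, a]`,
whence `q'(0) ≥ 0`. At a maximum point of `f` on `[0, a]` we have `f' = 0` (at the ends by the
Neumann condition and by evenness), so `f'' ≤ 0` there and the equation forces `f ≤ 1`. If
`f(0) = 1`, then `g = 1 - f` satisfies `g'' ≤ 4κ²g` with `g(0) = g'(0) = 0`, so `g ≤ 0` by
Gronwall's inequality applied to the two factors of `D² - 4κ²`; thus `f ≡ 1` on `[0, a]`, the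
equation gives `q ≡ 0` there, and `q'(a) = 0` contradicts `h₀ > 0`.
-/

open Set Filter Topology

section Calculus

variable {f : ℝ → ℝ} {a b y : ℝ}

theorem eqOn_Icc_of_eqOn_Ioo {g : ℝ → ℝ} (hab : a ≠ b) (hf : Continuous f) (hg : Continuous g)
    (h : EqOn f g (Ioo a b)) : EqOn f g (Icc a b) := by
  simpa [closure_Ioo hab] using h.closure hf hg

theorem deriv_eq_zero_of_eventually_even (h : ∀ᶠ x in 𝓝 0, f (-x) = f x) : deriv f 0 = 0 := by
  have := EventuallyEq.deriv_eq (show (fun x => f (-x)) =ᶠ[𝓝 0] f from h)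
  rw [deriv_comp_neg, neg_zero] at this
  linarith

theorem eventually_nhdsGT_lt_of_deriv_neg (hf : deriv f y < 0) : ∀ᶠ x in 𝓝[>] y, f x < f y := by
  have hsign := eventually_nhdsWithin_sign_eq_of_deriv_neg (f := fun x => f x - f y)
    (by rwa [deriv_sub_const]) (sub_self _)
  filter_upwards [nhdsWithin_le_nhds hsign, self_mem_nhdsWithin] with x hx (hyx : y < x)
  rw [sign_eq_neg_one_iff.mpr (sub_neg.mpr hyx), sign_eq_neg_one_iff] at hx
  linarith

theorem eventually_nhdsLT_lt_of_deriv_pos (hf : 0 < deriv f y) : ∀ᶠ x in 𝓝[<] y, f x < f y := by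
  have hsign := eventually_nhdsWithin_sign_eq_of_deriv_pos (f := fun x => f x - f y)
    (by rwa [deriv_sub_const]) (sub_self _)
  filter_upwards [nhdsWithin_le_nhds hsign, self_mem_nhdsWithin] with x hx (hxy : x < y)
  rw [sign_eq_neg_one_iff.mpr (sub_neg.mpr hxy), sign_eq_neg_one_iff] at hx
  linarith

theorem deriv_nonneg_of_isMinOn_Icc_left (hab : a < b) (hmin : IsMinOn f (Icc a b) a) :
    0 ≤ deriv f a := by
  by_contra! h
  obtain ⟨x, hlt, hx⟩ :=
    ((eventually_nhdsGT_lt_of_deriv_neg h).and (Ico_mem_nhdsGT hab)).exists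
  exact (hmin (Ico_subset_Icc_self hx)).not_gt hlt

theorem deriv_nonpos_of_isMinOn_Icc_right (hab : a < b) (hmin : IsMinOn f (Icc a b) b) :
    deriv f b ≤ 0 := by
  by_contra! h
  obtain ⟨x, hlt, hx⟩ :=
    ((eventually_nhdsLT_lt_of_deriv_pos h).and (Ioc_mem_nhdsLT hab)).exists
  exact (hmin (Ioc_subset_Icc_self hx)).not_gt hlt

theorem eventually_lt_of_deriv_deriv_pos (hf : Differentiable ℝ f) (hd : deriv f y = 0)
    (h2 : 0 < deriv (deriv f) y) : ∀ᶠ x in 𝓝[≠] y, f y < f x := by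
  obtain ⟨l, u, ⟨hl, hu⟩, hsign⟩ :=
    mem_nhds_iff_exists_Ioo_subset.mp (eventually_nhdsWithin_sign_eq_of_deriv_pos h2 hd)
  filter_upwards [nhdsWithin_le_nhds (Ioo_mem_nhds hl hu), self_mem_nhdsWithin]
    with x hx (hne : x ≠ y)
  rcases hne.lt_or_gt with hxy | hyx
  · obtain ⟨ξ, hξ, hslope⟩ := exists_deriv_eq_slope f hxy hf.continuous.continuousOn
      (hf.differentiableOn.mono Ioo_subset_Icc_self)
    have := hsign ⟨hx.1.trans hξ.1, hξ.2.trans hu⟩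
    rw [mem_ofPred_eq, sign_eq_neg_one_iff.mpr (sub_neg.mpr hξ.2), sign_eq_neg_one_iff, hslope,
      div_lt_iff₀ (sub_pos.2 hxy), zero_mul] at this
    linarith
  · obtain ⟨ξ, hξ, hslope⟩ := exists_deriv_eq_slope f hyx hf.continuous.continuousOn
      (hf.differentiableOn.mono Ioo_subset_Icc_self)
    have := hsign ⟨hl.trans hξ.1, hξ.2.trans hx.2⟩
    rw [mem_ofPred_eq, sign_eq_one_iff.mpr (sub_pos.mpr hξ.1), sign_eq_one_iff, hslope,
      lt_div_iff₀ (sub_pos.2 hyx), zero_mul] at this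
    linarith

theorem deriv_deriv_nonpos_of_isMaxOn_Icc (hf : Differentiable ℝ f) (hab : a < b)
    (hy : y ∈ Icc a b) (hmax : IsMaxOn f (Icc a b) y) (hd : deriv f y = 0) :
    deriv (deriv f) y ≤ 0 := by
  by_contra! h2
  have hfreq : ∃ᶠ x in 𝓝[≠] y, x ∈ Icc a b := by
    rcases hy.2.lt_or_eq with hyb | rfl
    · exact (Eventually.frequently (mem_of_superset (Ico_mem_nhdsGT_of_mem ⟨hy.1, hyb⟩)
        Ico_subset_Icc_self)).filter_mono (nhdsGT_le_nhdsNE y)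
    · exact (Eventually.frequently (mem_of_superset (Ioc_mem_nhdsLT hab)
        Ioc_subset_Icc_self)).filter_mono (nhdsLT_le_nhdsNE y)
  obtain ⟨x, hlt, hx⟩ := ((eventually_lt_of_deriv_deriv_pos hf hd h2).and_frequently hfreq).exists
  exact (hmax hx).not_gt hlt

theorem deriv_deriv_nonneg_of_isMinOn_Icc (hf : Differentiable ℝ f) (hab : a < b)
    (hy : y ∈ Icc a b) (hmin : IsMinOn f (Icc a b) y) (hd : deriv f y = 0) :
    0 ≤ deriv (deriv f) y := by
  have := deriv_deriv_nonpos_of_isMaxOn_Icc hf.neg hab hy hmin.neg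
    (by simp only [deriv.neg', hd, neg_zero])
  rw [deriv.neg', deriv.fun_neg] at this
  linarith

theorem nonpos_of_deriv_le_mul_self {K : ℝ} (hf : Differentiable ℝ f) (ha : f a ≤ 0)
    (h : ∀ x ∈ Ico a b, deriv f x ≤ K * f x) : ∀ x ∈ Icc a b, f x ≤ 0 := by
  intro x hx
  simpa [gronwallBound_ε0_δ0] using le_gronwallBound_of_liminf_deriv_right_le (ε := 0)
    hf.continuous.continuousOn
    (fun x _ r hr => (hf x).hasDerivAt.hasDerivWithinAt.liminf_right_slope_le hr) ha
    (fun x hx => (h x hx).trans_eq (add_zero _).symm) x hx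

theorem nonpos_of_deriv_deriv_le_sq_mul_self {c : ℝ} (hf : Differentiable ℝ f)
    (hf' : Differentiable ℝ (deriv f)) (ha : f a = 0) (ha' : deriv f a = 0)
    (h : ∀ x ∈ Ico a b, deriv (deriv f) x ≤ c ^ 2 * f x) : ∀ x ∈ Icc a b, f x ≤ 0 := by
  -- factor `D² - c²` as `(D + c)(D - c)` and apply the first-order inequality twice
  have hv : ∀ x ∈ Icc a b, deriv f x + c * f x ≤ 0 := by
    refine nonpos_of_deriv_le_mul_self (K := c) (hf'.add (hf.const_mul c)) (by simp [ha, ha'])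
      fun x hx => ?_
    rw [deriv_fun_add (hf' x) ((hf x).const_mul c), deriv_const_mul c (hf x)]
    linear_combination h x hx
  exact nonpos_of_deriv_le_mul_self (K := -c) hf ha.le
    fun x hx => by linarith [hv x (Ico_subset_Icc_self hx)]

theorem nonneg_of_deriv_deriv_eq_mul {w : ℝ → ℝ} (hf : Differentiable ℝ f) (hab : a < b)
    (ha : f a = 0) (hb : 0 < deriv f b) (hw : ∀ x ∈ Ioo a b, 0 < w x)
    (heq : ∀ x ∈ Ioo a b, deriv (deriv f) x = f x * w x) : ∀ x ∈ Icc a b, 0 ≤ f x := by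
  obtain ⟨x₀, hx₀, hmin⟩ :=
    isCompact_Icc.exists_isMinOn (nonempty_Icc.2 hab.le) hf.continuous.continuousOn
  suffices 0 ≤ f x₀ from fun x hx => this.trans (hmin hx)
  rcases eq_endpoints_or_mem_Ioo_of_mem_Icc hx₀ with rfl | rfl | hx₀'
  · exact ha.ge
  · exact absurd (deriv_nonpos_of_isMinOn_Icc_right hab hmin) hb.not_ge
  · have hd : deriv f x₀ = 0 := (hmin.isLocalMin (Icc_mem_nhds hx₀'.1 hx₀'.2)).deriv_eq_zero
    have h2 := deriv_deriv_nonneg_of_isMinOn_Icc hf hab hx₀ hmin hd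
    rw [heq x₀ hx₀'] at h2
    exact nonneg_of_mul_nonneg_left h2 (hw x₀ hx₀')

end Calculus

namespace GinzburgLandau

variable {f q : ℝ → ℝ} {κ a : ℝ}

theorem le_one (hf : Differentiable ℝ f) (hκ : κ ≠ 0) (ha : 0 < a)
    (hpos : ∀ x ∈ Icc 0 a, 0 < f x) (hdf0 : deriv f 0 = 0) (hdfa : deriv f a = 0)
    (hfeq : ∀ x ∈ Icc 0 a, deriv (deriv f) x = κ ^ 2 * (f x * (f x ^ 2 + q x ^ 2 - 1))) :
    ∀ x ∈ Icc 0 a, f x ≤ 1 := by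
  obtain ⟨x₀, hx₀, hmax⟩ :=
    isCompact_Icc.exists_isMaxOn (nonempty_Icc.2 ha.le) hf.continuous.continuousOn
  suffices f x₀ ≤ 1 from fun x hx => (hmax hx).trans this
  have hd : deriv f x₀ = 0 := by
    rcases eq_endpoints_or_mem_Ioo_of_mem_Icc hx₀ with rfl | rfl | hx₀'
    · exact hdf0
    · exact hdfa
    · exact (hmax.isLocalMax (Icc_mem_nhds hx₀'.1 hx₀'.2)).deriv_eq_zero
  by_contra! h1
  have h2 := deriv_deriv_nonpos_of_isMaxOn_Icc hf ha hx₀ hmax hd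
  rw [hfeq x₀ hx₀] at h2
  have := hpos x₀ hx₀
  have : 0 < f x₀ ^ 2 + q x₀ ^ 2 - 1 := by nlinarith [sq_nonneg (q x₀)]
  exact h2.not_gt (by positivity)

theorem eq_one_of_apply_zero_eq_one (hf : ContDiff ℝ 2 f) (hpos : ∀ x ∈ Icc 0 a, 0 < f x)
    (hle : ∀ x ∈ Icc 0 a, f x ≤ 1) (hf0 : f 0 = 1) (hdf0 : deriv f 0 = 0)
    (hfeq : ∀ x ∈ Icc 0 a, deriv (deriv f) x = κ ^ 2 * (f x * (f x ^ 2 + q x ^ 2 - 1))) :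
    ∀ x ∈ Icc 0 a, f x = 1 := by
  have hg' : deriv (fun x => 1 - f x) = fun x => -deriv f x := deriv_const_sub' 1
  have hg'' (x : ℝ) : deriv (deriv (fun x => 1 - f x)) x = -deriv (deriv f) x := by
    rw [hg', deriv.fun_neg]
  -- `f (f² + q² - 1) ≥ f (f² - 1) ≥ -2 (1 - f)` for `0 < f ≤ 1`, so `g = 1 - f` has `g'' ≤ 4κ²g`
  have hg := nonpos_of_deriv_deriv_le_sq_mul_self (c := 2 * κ)
    ((hf.differentiable two_ne_zero).const_sub 1)
    (by rw [hg']; exact hf.differentiable_deriv_two.neg) (by rw [hf0, sub_self])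
    (by simp only [hg', hdf0, neg_zero]) fun x hx => by
      have hx' := Ico_subset_Icc_self hx
      have h1 := hpos x hx'
      have h2 := hle x hx'
      rw [hg'', hfeq x hx']
      nlinarith [mul_nonneg (sq_nonneg κ) (add_nonneg (mul_nonneg h1.le (sq_nonneg (q x)))
        (mul_nonneg (sub_nonneg.2 h2) (by nlinarith : (0 : ℝ) ≤ 4 - f x - f x ^ 2)))]
  exact fun x hx => le_antisymm (hle x hx) (by linarith [hg x hx])

theorem deriv_eq_zero_of_eq_one (hq : ContDiff ℝ 2 q) (hκ : κ ≠ 0) (ha : 0 < a)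
    (hone : ∀ x ∈ Icc 0 a, f x = 1)
    (hfeq : ∀ x ∈ Icc 0 a, deriv (deriv f) x = κ ^ 2 * (f x * (f x ^ 2 + q x ^ 2 - 1))) :
    deriv q a = 0 := by
  have hf1 : EqOn f (fun _ => 1) (Ioo 0 a) := fun x hx => hone x (Ioo_subset_Icc_self hx)
  have hf'' : EqOn (deriv (deriv f)) (fun _ => 0) (Ioo 0 a) := by
    simpa using (hf1.deriv isOpen_Ioo).deriv isOpen_Ioo
  have hq0 : EqOn q (fun _ => 0) (Ioo 0 a) := fun x hx => by
    have := hfeq x (Ioo_subset_Icc_self hx)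
    rw [hf'' hx, hf1 hx] at this
    simpa [hκ] using this
  have hq' : EqOn (deriv q) (fun _ => 0) (Ioo 0 a) := by simpa using hq0.deriv isOpen_Ioo
  exact eqOn_Icc_of_eqOn_Ioo ha.ne (hq.continuous_deriv one_le_two) continuous_const hq'
    (right_mem_Icc.2 ha.le)

end GinzburgLandau

theorem stmt_5_general (a κ h₀ : ℝ) (ha : 0 < a) (hκ : 0 < κ) (hh₀ : 0 < h₀)
    (f q : ℝ → ℝ) (hf2 : ContDiff ℝ 2 f) (hq2 : ContDiff ℝ 2 q)
    (hfeq : ∀ x ∈ Set.Ioo (-a) a,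
      (1 / κ ^ 2) * deriv (deriv f) x = f x * ((f x) ^ 2 + (q x) ^ 2 - 1))
    (hqeq : ∀ x ∈ Set.Ioo (-a) a, deriv (deriv q) x = q x * (f x) ^ 2)
    (hbf2 : deriv f a = 0)
    (hbq2 : deriv q a = h₀)
    (hfpos : ∀ x ∈ Set.Icc (-a) a, 0 < f x)
    (heven : ∀ x ∈ Set.Icc (-a) a, f (-x) = f x)
    (hodd : ∀ x ∈ Set.Icc (-a) a, q (-x) = -q x) :
    deriv f 0 = 0 ∧ q 0 = 0 ∧ f 0 ∈ Set.Ioo (0 : ℝ) 1 ∧ 0 ≤ deriv q 0 ∧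
    deriv f a = 0 ∧ deriv q a = h₀ := by
  have hIcc : Icc 0 a ⊆ Icc (-a) a := Icc_subset_Icc_left (by linarith)
  have h0 : (0 : ℝ) ∈ Icc 0 a := left_mem_Icc.2 ha.le
  have hq0 : q 0 = 0 := CharZero.eq_neg_self_iff.mp (by simpa using hodd 0 (hIcc h0))
  have hdf0 : deriv f 0 = 0 :=
    deriv_eq_zero_of_eventually_even (eventually_of_mem (Icc_mem_nhds (by linarith) ha) heven)
  have hfeq' : ∀ x ∈ Icc 0 a,
      deriv (deriv f) x = κ ^ 2 * (f x * (f x ^ 2 + q x ^ 2 - 1)) := by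
    have hEq : EqOn (deriv (deriv f)) (fun x => κ ^ 2 * (f x * (f x ^ 2 + q x ^ 2 - 1)))
        (Ioo (-a) a) := fun x hx => by
      simp only [← hfeq x hx]; field_simp
    have hcont : Continuous fun x => κ ^ 2 * (f x * (f x ^ 2 + q x ^ 2 - 1)) := by
      have := hf2.continuous; have := hq2.continuous; fun_prop
    exact fun x hx => eqOn_Icc_of_eqOn_Ioo (by linarith) (hf2.deriv' (n := 1)).continuous_deriv_one
      hcont hEq (hIcc hx)
  have hpos : ∀ x ∈ Icc 0 a, 0 < f x := fun x hx => hfpos x (hIcc hx)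
  have hq_nonneg := nonneg_of_deriv_deriv_eq_mul (w := fun x => f x ^ 2)
    (hq2.differentiable two_ne_zero) ha hq0 (hbq2 ▸ hh₀)
    (fun x hx => pow_pos (hpos x (Ioo_subset_Icc_self hx)) 2)
    (fun x hx => hqeq x (Ioo_subset_Ioo_left (by linarith) hx))
  have hdq0 : 0 ≤ deriv q 0 :=
    deriv_nonneg_of_isMinOn_Icc_left ha fun x hx => (hq0.trans_le (hq_nonneg x hx) :)
  have hle := GinzburgLandau.le_one (hf2.differentiable two_ne_zero) hκ.ne' ha hpos hdf0 hbf2 hfeq'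
  have hf01 : f 0 < 1 := (hle 0 h0).lt_of_ne fun h1 => hh₀.ne' <| hbq2 ▸
    GinzburgLandau.deriv_eq_zero_of_eq_one hq2 hκ.ne' ha
      (GinzburgLandau.eq_one_of_apply_zero_eq_one hf2 hpos hle h1 hdf0 hfeq') hfeq'
  exact ⟨hdf0, hq0, ⟨hpos 0 h0, hf01⟩, hdq0, hbf2, hbq2⟩

theorem stmt_5 (a κ h₀ : ℝ) (ha : 0 < a) (hκ : 0 < κ) (hh₀ : 0 < h₀)
    (f q : ℝ → ℝ) (hf2 : ContDiff ℝ 2 f) (hq2 : ContDiff ℝ 2 q)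
    (hfeq : ∀ x ∈ Set.Ioo (-a) a,
      (1 / κ ^ 2) * deriv (deriv f) x = f x * ((f x) ^ 2 + (q x) ^ 2 - 1))
    (hqeq : ∀ x ∈ Set.Ioo (-a) a, deriv (deriv q) x = q x * (f x) ^ 2)
    (hbf1 : deriv f (-a) = 0) (hbf2 : deriv f a = 0)
    (hbq1 : deriv q (-a) = h₀) (hbq2 : deriv q a = h₀)
    (hfpos : ∀ x ∈ Set.Icc (-a) a, 0 < f x)
    (heven : ∀ x ∈ Set.Icc (-a) a, f (-x) = f x)
    (hodd : ∀ x ∈ Set.Icc (-a) a, q (-x) = -q x)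
    (hnot1 : ∃ x ∈ Set.Icc (-a) a, f x ≠ 1) :
    deriv f 0 = 0 ∧ q 0 = 0 ∧ f 0 ∈ Set.Ioo (0 : ℝ) 1 ∧ 0 ≤ deriv q 0 ∧
    deriv f a = 0 ∧ deriv q a = h₀ :=
  stmt_5_general a κ h₀ ha hκ hh₀ f q hf2 hq2 hfeq hqeq hbf2 hbq2 hfpos heven hodd
end

section
/- For κ = 1/√2, if (f,q) solve the first-order system f' = −fq/√2 and q' = (1−f²)/√2 on an interval, then they solve the second-order Ginzburg-Landau equations 2f'' = f(f²+q²−1) and q'' = qf². -/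
/-!
Differentiating the first-order (self-dual) equations once more and substituting them back
into the result gives the second-order equations; with `f' = -f q / a` and `q' = (1 - f²) / a`
one gets `a² f'' = f (f² + q² - 1)` and `a² q'' = 2 q f²`, and `a = √2` is the case `κ = 1/√2`.
-/

open Filter Topology

theorem hasDerivAt_deriv_of_eventually_hasDerivAt {𝕜 F : Type*} [NontriviallyNormedField 𝕜]
    [NormedAddCommGroup F] [NormedSpace 𝕜 F] {g g' : 𝕜 → F} {g'' : F} {x : 𝕜}
    (hg : ∀ᶠ y in 𝓝 x, HasDerivAt g (g' y) y) (h : HasDerivAt g' g'' x) :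
    HasDerivAt (deriv g) g'' x :=
  h.congr_of_eventuallyEq (hg.mono fun _ hy => hy.deriv)

section SelfDual

variable {a x : ℝ} {f q : ℝ → ℝ}
  (hf : ∀ᶠ y in 𝓝 x, HasDerivAt f (-(f y * q y) / a) y)
  (hq : ∀ᶠ y in 𝓝 x, HasDerivAt q ((1 - f y ^ 2) / a) y)
include hf hq

theorem hasDerivAt_deriv_of_selfDual_left :
    HasDerivAt (deriv f) (f x * (f x ^ 2 + q x ^ 2 - 1) / a ^ 2) x := by
  have hfx := hf.self_of_nhds
  have hqx := hq.self_of_nhds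
  exact (hasDerivAt_deriv_of_eventually_hasDerivAt hf ((hfx.mul hqx).neg.div_const a)).congr_deriv
    (by ring)

theorem hasDerivAt_deriv_of_selfDual_right :
    HasDerivAt (deriv q) (2 * q x * f x ^ 2 / a ^ 2) x := by
  have hfx := hf.self_of_nhds
  exact (hasDerivAt_deriv_of_eventually_hasDerivAt hq
    (((hasDerivAt_const x 1).sub (hfx.pow 2)).div_const a)).congr_deriv (by ring)

end SelfDual

theorem stmt_7 (b c : ℝ) (f q : ℝ → ℝ)
    (hf : ∀ x ∈ Set.Ioo b c, HasDerivAt f (-(f x * q x) / Real.sqrt 2) x)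
    (hq : ∀ x ∈ Set.Ioo b c, HasDerivAt q ((1 - (f x) ^ 2) / Real.sqrt 2) x) :
    ∀ x ∈ Set.Ioo b c,
      2 * deriv (deriv f) x = f x * ((f x) ^ 2 + (q x) ^ 2 - 1) ∧
      deriv (deriv q) x = q x * (f x) ^ 2 := by
  intro x hx
  have hnhds : Set.Ioo b c ∈ 𝓝 x := isOpen_Ioo.mem_nhds hx
  have hf' := eventually_of_mem hnhds hf
  have hq' := eventually_of_mem hnhds hq
  have hsqrt : Real.sqrt 2 ^ 2 = 2 := Real.sq_sqrt zero_le_two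
  rw [(hasDerivAt_deriv_of_selfDual_left hf' hq').deriv,
    (hasDerivAt_deriv_of_selfDual_right hf' hq').deriv, hsqrt]
  constructor <;> ring
end

section
/- If (f,q) solves the Ginzburg-Landau system on (−a,a) with f > 0 and sup f > 1, then f attains an interior maximum at a point x₀ where f''(x₀) ≤ 0, yet the equation forces f''(x₀) = κ²f(x₀)(f(x₀)²+q(x₀)²−1) > 0, a contradiction; hence f ≤ 1. -/
theorem stmt_12 (a κ h₀ : ℝ) (ha : 0 < a) (hκ : 0 < κ)
    (f q : ℝ → ℝ) (hf2 : ContDiff ℝ 2 f) (hq2 : ContDiff ℝ 2 q)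
    (hfeq : ∀ x ∈ Set.Ioo (-a) a,
      (1 / κ ^ 2) * deriv (deriv f) x = f x * ((f x) ^ 2 + (q x) ^ 2 - 1))
    (hqeq : ∀ x ∈ Set.Ioo (-a) a, deriv (deriv q) x = q x * (f x) ^ 2)
    (hbf1 : deriv f (-a) = 0) (hbf2 : deriv f a = 0)
    (hfpos : ∀ x ∈ Set.Icc (-a) a, 0 < f x) :
    ∀ x ∈ Set.Icc (-a) a, f x ≤ 1 := by
  have hκ2 : (0:ℝ) < κ ^ 2 := by positivity
  have hf1 : ContDiff ℝ 1 (deriv f) := by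
    have h2 : ContDiff ℝ (1+1 : ℕ) f := by exact_mod_cast hf2
    exact (contDiff_succ_iff_deriv.mp h2).2.2
  have hcf' : Continuous (deriv f) := hf1.continuous
  have hcf'' : Continuous (deriv (deriv f)) := hf1.continuous_deriv le_rfl
  have heq : ∀ x ∈ Set.Icc (-a) a,
      (1 / κ ^ 2) * deriv (deriv f) x = f x * ((f x) ^ 2 + (q x) ^ 2 - 1) := by
    have hcl : closure (Set.Ioo (-a) a) = Set.Icc (-a) a :=
      closure_Ioo (by linarith : -a ≠ a)
    have hE : Set.EqOn (fun x => (1 / κ ^ 2) * deriv (deriv f) x)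
        (fun x => f x * ((f x) ^ 2 + (q x) ^ 2 - 1)) (Set.Icc (-a) a) := by
      rw [← hcl]
      exact Set.EqOn.closure (fun x hx => hfeq x hx)
        (continuous_const.mul hcf'')
        (hf2.continuous.mul (((hf2.continuous.pow 2).add (hq2.continuous.pow 2)).sub continuous_const))
    exact fun x hx => hE hx
  intro x hx
  by_contra hgt
  push_neg at hgt
  obtain ⟨x₀, hx₀, hmax⟩ := (isCompact_Icc (a := -a) (b := a)).exists_isMaxOn
    (Set.nonempty_Icc.mpr (by linarith : -a ≤ a)) (hf2.continuous.continuousOn)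
  have hfx₀ : 1 < f x₀ := lt_of_lt_of_le hgt (hmax hx)
  have hfpos₀ := hfpos x₀ hx₀
  have hdd : 0 < deriv (deriv f) x₀ := by
    have h := heq x₀ hx₀
    have hinv : (0:ℝ) < 1 / κ ^ 2 := by positivity
    by_contra hc
    push_neg at hc
    have h1 : 0 < f x₀ * ((f x₀) ^ 2 + (q x₀) ^ 2 - 1) := by
      nlinarith [sq_nonneg (q x₀)]
    nlinarith [mul_nonpos_of_nonneg_of_nonpos hinv.le hc]
  have hder0 : deriv f x₀ = 0 := by
    rcases eq_or_lt_of_le hx₀.1 with h | h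
    · rw [← h]; exact hbf1
    rcases eq_or_lt_of_le hx₀.2 with h' | h'
    · rw [h']; exact hbf2
    · exact (hmax.isLocalMax (Icc_mem_nhds h h')).deriv_eq_zero
  have hev : ∀ᶠ y in nhds x₀, 0 < deriv (deriv f) y :=
    (hcf''.tendsto x₀).eventually (eventually_gt_nhds hdd)
  obtain ⟨δ, hδpos, hδ⟩ := Metric.eventually_nhds_iff.mp hev
  by_cases hlt : x₀ < a
  · -- increasing to the right
    set x₁ := min (x₀ + δ / 2) a with hx₁def
    have hx01 : x₀ < x₁ := lt_min (by linarith) hlt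
    have hsub : ∀ y ∈ Set.Icc x₀ x₁, dist y x₀ < δ := by
      intro y hy
      rw [Real.dist_eq, abs_lt]
      constructor
      · linarith [hy.1]
      · have := hy.2
        have : y ≤ x₀ + δ / 2 := le_trans this (min_le_left _ _)
        linarith
    have hmono' : StrictMonoOn (deriv f) (Set.Icc x₀ x₁) :=
      strictMonoOn_of_deriv_pos (convex_Icc _ _) hcf'.continuousOn
        (fun y hy => by
          rw [interior_Icc] at hy
          exact hδ (hsub y ⟨hy.1.le, hy.2.le⟩))
    have hmono : StrictMonoOn f (Set.Icc x₀ x₁) :=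
      strictMonoOn_of_deriv_pos (convex_Icc _ _) hf2.continuous.continuousOn
        (fun y hy => by
          rw [interior_Icc] at hy
          have := hmono' (Set.left_mem_Icc.mpr hx01.le) ⟨hy.1.le, hy.2.le⟩ hy.1
          rw [hder0] at this
          exact this)
    have h1 : f x₀ < f x₁ :=
      hmono (Set.left_mem_Icc.mpr hx01.le) (Set.right_mem_Icc.mpr hx01.le) hx01
    have hmem : x₁ ∈ Set.Icc (-a) a := ⟨le_trans hx₀.1 hx01.le, min_le_right _ _⟩
    exact absurd (hmax hmem) (not_le.mpr h1)
  · -- x₀ = a, decreasing to the left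
    have hx₀a : x₀ = a := le_antisymm hx₀.2 (not_lt.mp hlt)
    set x₁ := max (x₀ - δ / 2) (-a) with hx₁def
    have hx01 : x₁ < x₀ := max_lt (by linarith) (by rw [hx₀a]; linarith)
    have hsub : ∀ y ∈ Set.Icc x₁ x₀, dist y x₀ < δ := by
      intro y hy
      rw [Real.dist_eq, abs_lt]
      constructor
      · have : x₀ - δ / 2 ≤ y := le_trans (le_max_left _ _) hy.1
        linarith
      · linarith [hy.2]
    have hmono' : StrictMonoOn (deriv f) (Set.Icc x₁ x₀) :=
      strictMonoOn_of_deriv_pos (convex_Icc _ _) hcf'.continuousOn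
        (fun y hy => by
          rw [interior_Icc] at hy
          exact hδ (hsub y ⟨hy.1.le, hy.2.le⟩))
    have hanti : StrictAntiOn f (Set.Icc x₁ x₀) :=
      strictAntiOn_of_deriv_neg (convex_Icc _ _) hf2.continuous.continuousOn
        (fun y hy => by
          rw [interior_Icc] at hy
          have := hmono' ⟨hy.1.le, hy.2.le⟩ (Set.right_mem_Icc.mpr hx01.le) hy.2
          rw [hder0] at this
          exact this)
    have h1 : f x₀ < f x₁ :=
      hanti (Set.left_mem_Icc.mpr hx01.le) (Set.right_mem_Icc.mpr hx01.le) hx01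
    have hmem : x₁ ∈ Set.Icc (-a) a := ⟨le_max_right _ _, le_trans hx01.le hx₀.2⟩
    exact absurd (hmax hmem) (not_le.mpr h1)
end

section
/- Along a solution of the Ginzburg-Landau system, the quantity H(x) = (1/κ²)f'(x)² + (q'(x))² − f(x)²q(x)² − (1/2)f(x)⁴ + f(x)² is constant (first integral). -/
/-! `H' = 2 f' ((1/κ²) f'' - f (f² + q² - 1)) + 2 q' (q'' - q f²)`: the two equations multiplied
by `2 f'` and `2 q'` and added. So `H'` vanishes wherever the system holds, and a function with
zero derivative on an interval is constant. -/

/-- `a` plays the role of `1/κ²`. -/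
noncomputable def glEnergy (a : ℝ) (f q : ℝ → ℝ) (x : ℝ) : ℝ :=
  a * deriv f x ^ 2 + deriv q x ^ 2 - f x ^ 2 * q x ^ 2 - (1 / 2) * f x ^ 4 + f x ^ 2

theorem hasDerivAt_glEnergy (a : ℝ) {f q : ℝ → ℝ} {x : ℝ}
    (hf : DifferentiableAt ℝ f x) (hq : DifferentiableAt ℝ q x)
    (hf' : DifferentiableAt ℝ (deriv f) x) (hq' : DifferentiableAt ℝ (deriv q) x) :
    HasDerivAt (glEnergy a f q)
      (2 * deriv f x * (a * deriv (deriv f) x - f x * (f x ^ 2 + q x ^ 2 - 1)) +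
        2 * deriv q x * (deriv (deriv q) x - q x * f x ^ 2)) x := by
  have h := (((((hf'.hasDerivAt.pow 2).const_mul a).add (hq'.hasDerivAt.pow 2)).sub
    ((hf.hasDerivAt.pow 2).mul (hq.hasDerivAt.pow 2))).sub
    ((hf.hasDerivAt.pow 4).const_mul (1 / 2))).add (hf.hasDerivAt.pow 2)
  refine (h : HasDerivAt (glEnergy a f q) _ x).congr_deriv ?_
  simp only [Pi.pow_apply]
  ring

theorem IsOpen.glEnergy_eq {s : Set ℝ} (hs : IsOpen s) (hs' : IsPreconnected s) (a : ℝ)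
    {f q : ℝ → ℝ} (hf : ContDiff ℝ 2 f) (hq : ContDiff ℝ 2 q)
    (hfeq : ∀ x ∈ s, a * deriv (deriv f) x = f x * (f x ^ 2 + q x ^ 2 - 1))
    (hqeq : ∀ x ∈ s, deriv (deriv q) x = q x * f x ^ 2) {x y : ℝ} (hx : x ∈ s)
    (hy : y ∈ s) :
    glEnergy a f q x = glEnergy a f q y := by
  have hderiv : ∀ z, HasDerivAt (glEnergy a f q) _ z := fun z =>
    hasDerivAt_glEnergy a (hf.differentiable two_ne_zero z) (hq.differentiable two_ne_zero z)
      (hf.differentiable_deriv_two z) (hq.differentiable_deriv_two z)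
  refine hs.is_const_of_deriv_eq_zero hs'
    (fun z _ => (hderiv z).differentiableAt.differentiableWithinAt) (fun z hz => ?_) hx hy
  rw [(hderiv z).deriv, hfeq z hz, hqeq z hz]
  simp

theorem stmt_14_general (b c κ : ℝ)
    (f q : ℝ → ℝ) (hf2 : ContDiff ℝ 2 f) (hq2 : ContDiff ℝ 2 q)
    (hfeq : ∀ x ∈ Set.Ioo b c,
      (1 / κ ^ 2) * deriv (deriv f) x = f x * ((f x) ^ 2 + (q x) ^ 2 - 1))
    (hqeq : ∀ x ∈ Set.Ioo b c, deriv (deriv q) x = q x * (f x) ^ 2)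
    (H : ℝ → ℝ)
    (hH : H = fun x => (1 / κ ^ 2) * (deriv f x) ^ 2 + (deriv q x) ^ 2 -
      (f x) ^ 2 * (q x) ^ 2 - (1 / 2) * (f x) ^ 4 + (f x) ^ 2) :
    ∀ x ∈ Set.Ioo b c, ∀ y ∈ Set.Ioo b c, H x = H y := by
  subst hH
  exact fun x hx y hy =>
    isOpen_Ioo.glEnergy_eq isPreconnected_Ioo (1 / κ ^ 2) hf2 hq2 hfeq hqeq hx hy

theorem stmt_14 (b c κ : ℝ) (hκ : 0 < κ)
    (f q : ℝ → ℝ) (hf2 : ContDiff ℝ 2 f) (hq2 : ContDiff ℝ 2 q)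
    (hfeq : ∀ x ∈ Set.Ioo b c,
      (1 / κ ^ 2) * deriv (deriv f) x = f x * ((f x) ^ 2 + (q x) ^ 2 - 1))
    (hqeq : ∀ x ∈ Set.Ioo b c, deriv (deriv q) x = q x * (f x) ^ 2)
    (H : ℝ → ℝ)
    (hH : H = fun x => (1 / κ ^ 2) * (deriv f x) ^ 2 + (deriv q x) ^ 2 -
      (f x) ^ 2 * (q x) ^ 2 - (1 / 2) * (f x) ^ 4 + (f x) ^ 2) :
    ∀ x ∈ Set.Ioo b c, ∀ y ∈ Set.Ioo b c, H x = H y :=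
  stmt_14_general b c κ f q hf2 hq2 hfeq hqeq H hH
end

section
/- In the limiting problem q'' = q(1−q²) on (0,a) with q(0)=0, q'(0)=α>0 and |q|≤1, the solution q is strictly increasing as long as q < 1, and the field h₀* satisfying q(a)=1 is characterized by a = ∫₀¹ ( (h₀*)² − (1/2)(1−u²)² )^{−1/2} du, where (q')² = (h₀*)² − (1/2)(1−q²)² along the trajectory with q'(a)=h₀* at q(a)=1. -/
/-!
The equation `q'' = q (1 - q²)` is Newton's law `q'' = -V'(q)` for the potential
`V u = (1 - u²)² / 4`, so the energy `(q')² / 2 + V q` is conserved; evaluating it at `x = a`,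
where `q = 1` and `q' = h`, gives `(q')² = h² - (1 - q²)² / 2`. Since `q` increases from `0` to
`1`, substituting `u = q x` in `a = ∫₀ᵃ q'(x) / √(h² - (1 - q(x)²)² / 2) dx` gives the integral
formula.
-/

open Set intervalIntegral

theorem energy_eq_of_deriv_deriv_eq {q V V' : ℝ → ℝ} {a b : ℝ} (hq : ContDiff ℝ 2 q)
    (hV : ∀ u, HasDerivAt V (V' u) u)
    (hqV : ∀ x ∈ Ioo a b, deriv (deriv q) x = -V' (q x)) :
    ∀ x ∈ Icc a b, deriv q x ^ 2 / 2 + V (q x) = deriv q b ^ 2 / 2 + V (q b) := by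
  have hq1 : Differentiable ℝ q := hq.differentiable two_ne_zero
  have hq'1 : Differentiable ℝ (deriv q) := hq.differentiable_deriv_two
  set E : ℝ → ℝ := fun x ↦ deriv q x ^ 2 / 2 + V (q x)
  have hE : ∀ x, HasDerivAt E (deriv q x * deriv (deriv q) x + V' (q x) * deriv q x) x := by
    intro x
    have h1 := ((hq'1 x).hasDerivAt.fun_pow 2).div_const 2
    have h2 := (hV (q x)).comp x (hq1 x).hasDerivAt
    exact (h1.fun_add h2).congr_deriv (by simp only [Nat.cast_ofNat]; ring)
  intro x hx
  rcases hx.2.eq_or_lt with rfl | hxb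
  · rfl
  obtain ⟨c, hc, hslope⟩ := exists_hasDerivAt_eq_slope E _ hxb
    (fun y _ ↦ (hE y).continuousAt.continuousWithinAt) fun y _ ↦ hE y
  have hE'c : deriv q c * deriv (deriv q) c + V' (q c) * deriv q c = 0 := by
    rw [hqV c ⟨hx.1.trans_lt hc.1, hc.2⟩]
    ring
  rw [hE'c, eq_comm, div_eq_zero_iff, sub_eq_zero] at hslope
  exact (hslope.resolve_right (sub_ne_zero.2 hxb.ne')).symm

theorem integral_one_div_sqrt_eq_of_deriv_sq {q G : ℝ → ℝ} {a b : ℝ} (hab : a ≤ b)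
    (hq : ContDiff ℝ 1 q) (hG : Continuous G) (hq'pos : ∀ x ∈ Icc a b, 0 < deriv q x)
    (hq'G : ∀ x ∈ Icc a b, deriv q x ^ 2 = G (q x)) :
    ∫ u in q a..q b, 1 / Real.sqrt (G u) = b - a := by
  rw [← uIcc_of_le hab] at hq'pos hq'G
  have hsqrt : ∀ x ∈ uIcc a b, Real.sqrt (G (q x)) = deriv q x := fun x hx ↦ by
    rw [← hq'G x hx, Real.sqrt_sq (hq'pos x hx).le]
  have hcont : ContinuousOn (fun u ↦ 1 / Real.sqrt (G u)) (q '' uIcc a b) := by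
    refine continuousOn_const.div hG.sqrt.continuousOn ?_
    rintro _ ⟨x, hx, rfl⟩
    exact hsqrt x hx ▸ (hq'pos x hx).ne'
  calc ∫ u in q a..q b, 1 / Real.sqrt (G u)
      = ∫ x in a..b, ((fun u ↦ 1 / Real.sqrt (G u)) ∘ q) x * deriv q x :=
        (integral_comp_mul_deriv' (fun x _ ↦ (hq.differentiable one_ne_zero x).hasDerivAt)
          (hq.continuous_deriv le_rfl).continuousOn hcont).symm
    _ = ∫ _ in a..b, (1 : ℝ) := integral_congr fun x hx ↦ by
        simp only [Function.comp_apply, hsqrt x hx]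
        exact one_div_mul_cancel (hq'pos x hx).ne'
    _ = b - a := by simp

theorem stmt_16_general (a h : ℝ) (ha : 0 < a) (hh : 0 < h)
    (q : ℝ → ℝ) (hq2 : ContDiff ℝ 2 q)
    (hqeq : ∀ x ∈ Set.Ioo 0 a, deriv (deriv q) x = q x * (1 - (q x) ^ 2))
    (hq0 : q 0 = 0)
    (hqa : q a = 1) (hq'a : deriv q a = h)
    (hq'pos : ∀ x ∈ Set.Ico 0 a, 0 < deriv q x) :
    (∀ x ∈ Set.Icc 0 a, (deriv q x) ^ 2 = h ^ 2 - (1 / 2) * (1 - (q x) ^ 2) ^ 2) ∧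
    a = ∫ u in (0 : ℝ)..1, 1 / Real.sqrt (h ^ 2 - (1 / 2) * (1 - u ^ 2) ^ 2) := by
  have hV : ∀ u : ℝ, HasDerivAt (fun u ↦ (1 - u ^ 2) ^ 2 / 4) (-(u * (1 - u ^ 2))) u := fun u ↦ by
    refine (((((hasDerivAt_id u).fun_pow 2).const_sub 1).fun_pow 2).div_const 4).congr_deriv ?_
    simp only [id, Nat.cast_ofNat]
    ring
  have hq'sq : ∀ x ∈ Icc 0 a, deriv q x ^ 2 = h ^ 2 - (1 / 2) * (1 - q x ^ 2) ^ 2 := by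
    intro x hx
    have := energy_eq_of_deriv_deriv_eq hq2 hV (fun x hx ↦ by rw [hqeq x hx, neg_neg]) x hx
    rw [hqa, hq'a] at this
    linarith
  have hq'pos' : ∀ x ∈ Icc 0 a, 0 < deriv q x := fun x hx ↦
    hx.2.eq_or_lt.elim (fun hxa ↦ hxa ▸ hq'a ▸ hh) fun hxa ↦ hq'pos x ⟨hx.1, hxa⟩
  refine ⟨hq'sq, ?_⟩
  have := integral_one_div_sqrt_eq_of_deriv_sq (G := fun u ↦ h ^ 2 - (1 / 2) * (1 - u ^ 2) ^ 2)
    ha.le (hq2.of_le one_le_two) (by fun_prop) hq'pos' hq'sq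
  rwa [hq0, hqa, sub_zero, eq_comm] at this

theorem stmt_16 (a h : ℝ) (ha : 0 < a) (hh : 0 < h)
    (q : ℝ → ℝ) (hq2 : ContDiff ℝ 2 q)
    (hqeq : ∀ x ∈ Set.Ioo 0 a, deriv (deriv q) x = q x * (1 - (q x) ^ 2))
    (hq0 : q 0 = 0)
    (hbound : ∀ x ∈ Set.Icc 0 a, 0 ≤ q x ∧ q x ≤ 1)
    (hqa : q a = 1) (hq'a : deriv q a = h)
    (hq'pos : ∀ x ∈ Set.Ico 0 a, 0 < deriv q x) :
    (∀ x ∈ Set.Icc 0 a, (deriv q x) ^ 2 = h ^ 2 - (1 / 2) * (1 - (q x) ^ 2) ^ 2) ∧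
    a = ∫ u in (0 : ℝ)..1, 1 / Real.sqrt (h ^ 2 - (1 / 2) * (1 - u ^ 2) ^ 2) :=
  stmt_16_general a h ha hh q hq2 hqeq hq0 hqa hq'a hq'pos
end
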